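/- Let α > 0 with α ≠ 1. If u : ℚ ∩ [0,1] → ℝ satisfies u(1-x) + (1-x)^α · u(y/(1-x)) = u(y) + (1-y)^α · u((1-x-y)/(1-y)) for all rational x, y ∈ [0,1) with x + y ≤ 1, then there exists a real constant λ such that u(x) = λ · (1/(1-α)) · (x^α + (1-x)^α - 1) for every rational x ∈ [0,1]. -/

import Mathlib

/-!
Evaluating (⋆) at `x = 1/2, y = 0` and at `x = 0, y = 1/2` gives `u 0 = u 1 = 0`. Read (⋆) as an
associativity law for a split `a + b + c = 1`:
`u (a + b) + (a + b)^α u (a / (a + b)) = u a + (b + c)^α u (b / (b + c))`.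
Summing it over the six permutations of `(a, b, 1 - a - b)` shows that `q ↦ u q - u (1 - q)` is
additive on `[0, 1]`, hence vanishes on its rationals, so `u` is symmetric. Splitting
`(xy, x(1-y), (1-x)y, (1-x)(1-y))` in two ways then gives `u x · s_α(y) = u y · s_α(x)`, and we
conclude with `y = 1/2`, since `s_α(1/2) ≠ 0` for `α ≠ 1`.
-/

open Real

def FundamentalEquation (α : ℝ) (u : ℚ → ℝ) : Prop :=
  ∀ x y : ℚ, 0 ≤ x → x < 1 → 0 ≤ y → y < 1 → x + y ≤ 1 →
    u (1 - x) + (1 - (x : ℝ)) ^ α * u (y / (1 - x))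
      = u y + (1 - (y : ℝ)) ^ α * u ((1 - x - y) / (1 - y))

noncomputable def tsallisEntropy (α x : ℝ) : ℝ := 1 / (1 - α) * (x ^ α + (1 - x) ^ α - 1)

section

variable {α : ℝ}

theorem tsallisEntropy_zero (hα : α ≠ 0) : tsallisEntropy α 0 = 0 := by
  simp [tsallisEntropy, zero_rpow hα]

theorem tsallisEntropy_one (hα : α ≠ 0) : tsallisEntropy α 1 = 0 := by
  simp [tsallisEntropy, zero_rpow hα]

theorem tsallisEntropy_half_ne_zero (hα : α ≠ 1) : tsallisEntropy α (1 / 2) ≠ 0 := by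
  have hpow : (1 / 2 : ℝ) ^ α ≠ 1 / 2 := by
    simpa using
      (rpow_right_inj (x := (1 / 2 : ℝ)) (by norm_num) (by norm_num) (z := 1)).not.mpr hα
  refine mul_ne_zero (one_div_ne_zero (sub_ne_zero.mpr hα.symm)) fun h ↦ hpow ?_
  norm_num at h
  linarith

theorem half_rpow_ne_one (hα : α ≠ 0) : (1 / 2 : ℝ) ^ α ≠ 1 := by
  simpa using (rpow_right_inj (x := (1 / 2 : ℝ)) (by norm_num) (by norm_num) (z := 0)).not.mpr hα

end

section Additive

variable {G : ℚ → ℝ}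
  (hadd : ∀ a b : ℚ, 0 ≤ a → 0 ≤ b → a + b ≤ 1 → G (a + b) = G a + G b)
include hadd

theorem map_natCast_div_eq_mul {n k : ℕ} (hk : k ≤ n) : G (k / n) = k * G (1 / n) := by
  induction k with
  | zero => simpa using hadd 0 0 le_rfl le_rfl (by norm_num)
  | succ k ih =>
    rcases Nat.eq_zero_or_pos n with rfl | hn
    · simp at hk
    have hsum : ((k + 1 : ℕ) : ℚ) / n = k / n + 1 / n := by push_cast; ring
    have hle : (k : ℚ) / n + 1 / n ≤ 1 := by
      rw [← hsum, div_le_one (by positivity)]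
      exact_mod_cast hk
    rw [hsum, hadd _ _ (by positivity) (by positivity) hle, ih (by omega)]
    push_cast; ring

theorem eq_zero_of_map_add (h1 : G 1 = 0) {q : ℚ} (hq0 : 0 ≤ q) (hq1 : q ≤ 1) : G q = 0 := by
  have hden : (0 : ℚ) < q.den := by exact_mod_cast q.den_pos
  have hunit : G (1 / q.den) = 0 := by
    have := map_natCast_div_eq_mul hadd (le_refl q.den)
    rw [div_self hden.ne', h1] at this
    exact (mul_eq_zero.mp this.symm).resolve_left (by exact_mod_cast q.den_pos.ne')
  have hnum : 0 ≤ q.num := Rat.num_nonneg.mpr hq0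
  have hq : ((q.num.toNat : ℕ) : ℚ) / q.den = q := by
    rw [show ((q.num.toNat : ℕ) : ℚ) = (q.num : ℚ) by exact_mod_cast Int.toNat_of_nonneg hnum]
    exact Rat.num_div_den q
  have hle : q.num.toNat ≤ q.den := by
    have : (q.num : ℚ) ≤ q.den := by
      rwa [← div_le_one hden, Rat.num_div_den]
    have : q.num ≤ q.den := by exact_mod_cast this
    omega
  rw [← hq, map_natCast_div_eq_mul hadd hle, hunit, mul_zero]

end Additive

namespace FundamentalEquation

variable {α : ℝ} {u : ℚ → ℝ} (h : FundamentalEquation α u)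

section

variable (hα : α ≠ 0)
include h hα

theorem map_zero : u 0 = 0 := by
  have := h (1 / 2) 0 (by norm_num) (by norm_num) le_rfl (by norm_num) (by norm_num)
  norm_num at this
  have : ((1 / 2 : ℝ) ^ α - 1) * u 0 = 0 := by linarith
  exact (mul_eq_zero.mp this).resolve_left (sub_ne_zero.mpr (half_rpow_ne_one hα))

theorem map_one : u 1 = 0 := by
  have := h 0 (1 / 2) le_rfl (by norm_num) (by norm_num) (by norm_num) (by norm_num)
  norm_num at this
  have : ((1 / 2 : ℝ) ^ α - 1) * u 1 = 0 := by linarith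
  exact (mul_eq_zero.mp this).resolve_left (sub_ne_zero.mpr (half_rpow_ne_one hα))

end

include h

/-- (⋆) at `x = c, y = a`; the redundant variables `s, t, r₁, r₂` let callers instantiate it
without rewriting under `u`. -/
theorem assoc {a b c s t r₁ r₂ : ℚ} (ha : 0 ≤ a) (hb : 0 ≤ b) (hc : 0 ≤ c) (ha1 : a < 1)
    (hc1 : c < 1) (habc : a + b + c = 1) (hs : a + b = s) (ht : b + c = t) (hr₁ : a / s = r₁)
    (hr₂ : b / t = r₂) :
    u s + (s : ℝ) ^ α * u r₁ = u a + (t : ℝ) ^ α * u r₂ := by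
  obtain rfl : s = 1 - c := by linarith
  obtain rfl : t = 1 - a := by linarith
  obtain rfl : b = 1 - c - a := by linarith
  subst hr₁ hr₂
  push_cast
  exact h c a hc hc1 ha ha1 (by linarith)

theorem map_add_add_map_one_sub {a b : ℚ} (ha : 0 ≤ a) (ha1 : a < 1) (hb : 0 ≤ b)
    (hb1 : b < 1) (hab : 0 < a + b) (hab1 : a + b ≤ 1) :
    u (a + b) + u (1 - a) + u (1 - b) = u a + u b + u (1 - a - b) := by
  have hc : 0 ≤ 1 - a - b := by linarith
  have hc1 : 1 - a - b < 1 := by linarith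
  have := h.assoc ha hb hc ha1 hc1 (by ring) rfl (t := 1 - a) (by ring) rfl rfl
  have := h.assoc hb ha hc hb1 hc1 (by ring) (s := a + b) (t := 1 - b) (by ring) (by ring) rfl rfl
  have := h.assoc ha hc hb ha1 hb1 (by ring) (s := 1 - b) (t := 1 - a) (by ring) (by ring) rfl rfl
  have := h.assoc hc ha hb hc1 hb1 (by ring) (s := 1 - b) (t := a + b) (by ring) (by ring) rfl rfl
  have := h.assoc hb hc ha hb1 ha1 (by ring) (s := 1 - a) (t := 1 - b) (by ring) (by ring) rfl rfl
  have := h.assoc hc hb ha hc1 ha1 (by ring) (s := 1 - a) (t := a + b) (by ring) (by ring) rfl rfl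
  linarith

theorem map_sub_map_one_sub_add (hα : α ≠ 0) {a b : ℚ} (ha : 0 ≤ a) (hb : 0 ≤ b)
    (hab : a + b ≤ 1) :
    u (a + b) - u (1 - (a + b)) = (u a - u (1 - a)) + (u b - u (1 - b)) := by
  by_cases hint : a < 1 ∧ b < 1 ∧ 0 < a + b
  · obtain ⟨ha1, hb1, hab0⟩ := hint
    have := h.map_add_add_map_one_sub ha ha1 hb hb1 hab0 hab
    rw [sub_add_eq_sub_sub]
    linarith
  · push Not at hint
    obtain ⟨rfl, rfl⟩ | ⟨rfl, rfl⟩ | ⟨rfl, rfl⟩ :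
        (a = 1 ∧ b = 0) ∨ (a = 0 ∧ b = 1) ∨ (a = 0 ∧ b = 0) := by
      rcases (show a ≤ 1 by linarith).lt_or_eq with ha1 | rfl
      · rcases (show b ≤ 1 by linarith).lt_or_eq with hb1 | rfl
        · have := hint ha1 hb1
          right; right; constructor <;> linarith
        · right; left; constructor <;> linarith
      · left; constructor <;> linarith
    all_goals norm_num [h.map_zero hα, h.map_one hα]

theorem map_one_sub (hα : α ≠ 0) {q : ℚ} (hq0 : 0 ≤ q) (hq1 : q ≤ 1) : u (1 - q) = u q :=
  (sub_eq_zero.mp <| eq_zero_of_map_add (G := fun q ↦ u q - u (1 - q))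
    (fun _ _ ha hb hab ↦ h.map_sub_map_one_sub_add hα ha hb hab)
    (by simp [h.map_zero hα, h.map_one hα]) hq0 hq1).symm

theorem map_sub_map (hα : α ≠ 0) {a b c s t r₁ r₂ : ℚ} (ha : 0 ≤ a) (hb : 0 ≤ b)
    (hc : 0 ≤ c) (ha1 : a < 1) (hb1 : b < 1) (hc1 : c < 1) (habc : a + b + c = 1) (hs : a + c = s)
    (ht : b + c = t) (hr₁ : a / s = r₁) (hr₂ : b / t = r₂) :
    u a - u b = (s : ℝ) ^ α * u r₁ - (t : ℝ) ^ α * u r₂ := by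
  have hab := h.assoc ha hb hc ha1 hc1 habc rfl ht rfl hr₂
  have hba := h.assoc hb ha hc hb1 hc1 (by linarith) (add_comm b a) hs rfl hr₁
  have hsymm : u (b / (a + b)) = u (a / (a + b)) := by
    rcases (add_nonneg ha hb).eq_or_lt with hab0 | hab0
    · rw [← hab0, div_zero, div_zero]
    · rw [← h.map_one_sub hα (div_nonneg ha hab0.le) (by rw [div_le_one hab0]; linarith)]
      congr 1
      field_simp
      ring
  rw [hsymm] at hba
  linarith

theorem map_mul_eq_map_mul (hα : α ≠ 0) {x y : ℚ} (hx0 : 0 < x) (hx1 : x < 1) (hy0 : 0 < y)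
    (hy1 : y < 1) :
    u x * ((y : ℝ) ^ α + (1 - (y : ℝ)) ^ α - 1) =
      u y * ((x : ℝ) ^ α + (1 - (x : ℝ)) ^ α - 1) := by
  set M : ℚ := 1 - x * y
  have hM : 0 < M := by nlinarith
  have hx1' : 0 < 1 - x := by linarith
  have hy1' : 0 < 1 - y := by linarith
  have hx := h.assoc (a := x * y) (b := x * (1 - y)) (c := 1 - x) (s := x) (t := M) (r₁ := y)
    (by positivity) (by nlinarith) (by linarith) (by nlinarith) (by linarith) (by ring) (by ring)
    (by ring) (by field_simp) rfl
  have hy := h.assoc (a := x * y) (b := (1 - x) * y) (c := 1 - y) (s := y) (t := M) (r₁ := x)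
    (by positivity) (by nlinarith) (by linarith) (by nlinarith) (by linarith) (by ring) (by ring)
    (by ring) (by field_simp) rfl
  have hd := h.map_sub_map hα (a := x * (1 - y) / M) (b := (1 - x) * y / M)
    (c := (1 - x) * (1 - y) / M) (s := (1 - y) / M) (t := (1 - x) / M) (r₁ := x) (r₂ := y)
    (div_nonneg (mul_nonneg hx0.le hy1'.le) hM.le) (div_nonneg (mul_nonneg hx1'.le hy0.le) hM.le)
    (div_nonneg (mul_nonneg hx1'.le hy1'.le) hM.le) ((div_lt_one hM).mpr (by linarith))
    ((div_lt_one hM).mpr (by linarith)) ((div_lt_one hM).mpr (by nlinarith))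
    (by field_simp; ring) (by field_simp; ring) (by field_simp; ring)
    (by field_simp) (by field_simp)
  have hMy : (M : ℝ) ^ α * (((1 - y) / M : ℚ) : ℝ) ^ α = (1 - y) ^ α := by
    rw [← mul_rpow (by positivity) (by exact_mod_cast (div_pos hy1' hM).le)]
    push_cast
    field_simp
  have hMx : (M : ℝ) ^ α * (((1 - x) / M : ℚ) : ℝ) ^ α = (1 - x) ^ α := by
    rw [← mul_rpow (by positivity) (by exact_mod_cast (div_pos hx1' hM).le)]
    push_cast
    field_simp
  linear_combination hy - hx - ((M : ℝ) ^ α * hd + u x * hMy - u y * hMx)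

theorem map_mul_tsallisEntropy (hα : α ≠ 0) {x y : ℚ} (hx0 : 0 ≤ x) (hx1 : x ≤ 1)
    (hy0 : 0 ≤ y) (hy1 : y ≤ 1) : u x * tsallisEntropy α y = u y * tsallisEntropy α x := by
  rcases hx0.eq_or_lt with rfl | hx0
  · simp [h.map_zero hα, tsallisEntropy_zero hα]
  rcases hx1.lt_or_eq with hx1 | rfl
  swap; · simp [h.map_one hα, tsallisEntropy_one hα]
  rcases hy0.eq_or_lt with rfl | hy0
  · simp [h.map_zero hα, tsallisEntropy_zero hα]
  rcases hy1.lt_or_eq with hy1 | rfl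
  swap; · simp [h.map_one hα, tsallisEntropy_one hα]
  unfold tsallisEntropy
  linear_combination 1 / (1 - α) * h.map_mul_eq_map_mul hα hx0 hx1 hy0 hy1

end FundamentalEquation

/-- For `0 < α`, `α ≠ 1`, any `u : ℚ ∩ [0,1] → ℝ` satisfying the fundamental
functional equation at rational arguments is a multiple of `s_α` at every rational of `[0,1]`. -/
theorem stmt5 (α : ℝ) (hα : 0 < α) (hα1 : α ≠ 1) (u : ℚ → ℝ)
    (heq : ∀ x y : ℚ, 0 ≤ x → x < 1 → 0 ≤ y → y < 1 → x + y ≤ 1 →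
      u (1 - x) + (1 - (x : ℝ)) ^ α * u (y / (1 - x))
        = u y + (1 - (y : ℝ)) ^ α * u ((1 - x - y) / (1 - y))) :
    ∃ lam : ℝ, ∀ q : ℚ, 0 ≤ q → q ≤ 1 →
      u q = lam * ((1 / (1 - α)) * ((q : ℝ) ^ α + (1 - (q : ℝ)) ^ α - 1)) := by
  have h : FundamentalEquation α u := heq
  refine ⟨u (1 / 2) / tsallisEntropy α (1 / 2), fun q hq0 hq1 ↦ ?_⟩
  have key := h.map_mul_tsallisEntropy hα.ne' hq0 hq1 (y := 1 / 2) (by norm_num) (by norm_num)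
  push_cast at key
  change u q = _ * tsallisEntropy α q
  rw [div_mul_eq_mul_div, eq_div_iff (tsallisEntropy_half_ne_zero hα1), key]
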